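/- Let Σ and N be Hermitian positive definite complex s×s matrices, Σ̃ = Σ + N, and Ñ = (√((I+Σ̃⁻¹)⁻¹) (N⁻¹ − Σ̃⁻¹) √((I+Σ̃⁻¹)⁻¹))⁻¹. Then det(I + (Ñ + I)⁻¹ Σ̃) = det(I + (N + I)⁻¹ Σ). -/

import Mathlib

open Matrix
open scoped ComplexOrder Classical

/-!
Write `T = S + N`, `K = (1 + T⁻¹)⁻¹`, `M = √K` and `A = M (N⁻¹ - T⁻¹) M`, so that `Ñ = A⁻¹`;
`A` is positive definite because `N⁻¹ - T⁻¹ = (N + N S⁻¹ N)⁻¹` is, so every inverse is genuine.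
Since `T` commutes with `K`, it commutes with `M`, whence `M (1 + T) M = (1 + T) K = T`.
Since `(A⁻¹ + 1)⁻¹ = (1 + A)⁻¹ A`, the left side is `det (1 + A (1 + T)) / det (1 + A)`, and
Sylvester's identity `det (1 + X Y) = det (1 + Y X)` moves the outer factors `M` inside:
the numerator becomes `det (1 + (N⁻¹ - T⁻¹) T) = det (N⁻¹ T)` and the denominator
`det (1 + (N⁻¹ - T⁻¹) K) = det ((1 + N⁻¹) K)`. Their ratio is `det (1 + T) / det (N + 1)`,
which is also the right side.
-/

/-- The (Hermitian positive semidefinite) square root of a positive semidefinite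
complex matrix; junk value `0` if the matrix is not positive semidefinite.
For a Hermitian positive definite matrix this is its unique Hermitian positive
definite square root. -/
noncomputable def msqrt {s : ℕ} (A : Matrix (Fin s) (Fin s) ℂ) :
    Matrix (Fin s) (Fin s) ℂ :=
  if h : A.PosSemidef then (h.1.eigenvectorUnitary : Matrix (Fin s) (Fin s) ℂ) *
    diagonal ((↑) ∘ (√·) ∘ h.1.eigenvalues) * (star (h.1.eigenvectorUnitary : Matrix (Fin s) (Fin s) ℂ))
  else 0

namespace Matrix

variable {n : Type*} [Fintype n] [DecidableEq n]

section CommRing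

variable {R : Type*} [CommRing R]

theorem inv_add_one_inv {A : Matrix n n R} (hA : IsUnit A.det) :
    (A⁻¹ + 1)⁻¹ = (1 + A)⁻¹ * A := by
  have h : A⁻¹ + 1 = A⁻¹ * (1 + A) := by rw [mul_add, mul_one, nonsing_inv_mul _ hA]
  rw [h, mul_inv_rev, nonsing_inv_nonsing_inv _ hA]

theorem inv_sub_inv_add_eq_inv {S N : Matrix n n R} (hS : IsUnit S.det) (hN : IsUnit N.det)
    (hSN : IsUnit (S + N).det) :
    N⁻¹ - (S + N)⁻¹ = (N + N * S⁻¹ * N)⁻¹ := by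
  have h : N + N * S⁻¹ * N = (S + N) * S⁻¹ * N := by
    rw [add_mul, add_mul, mul_nonsing_inv _ hS, one_mul]
  rw [inv_sub_inv (by simp only [isUnit_iff_isUnit_det, hN, hSN]), add_sub_cancel_right, h,
    mul_inv_rev, mul_inv_rev, nonsing_inv_nonsing_inv _ hS, mul_assoc]

theorem commute_inv_one_add_inv {T : Matrix n n R} (hT : IsUnit T.det) :
    Commute T (1 + T⁻¹)⁻¹ := by
  have h := ((Commute.one_right T⁻¹).add_right (Commute.refl T⁻¹)).ringInverse_ringInverse
  rwa [← nonsing_inv_eq_ringInverse, ← nonsing_inv_eq_ringInverse,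
    nonsing_inv_nonsing_inv _ hT] at h

end CommRing

section Field

variable {F : Type*} [Field F]

theorem det_one_add_inv_mul {B X : Matrix n n F} (hB : IsUnit B.det) :
    (1 + B⁻¹ * X).det = (B + X).det / B.det := by
  have h : 1 + B⁻¹ * X = B⁻¹ * (B + X) := by rw [mul_add, nonsing_inv_mul _ hB]
  rw [h, det_mul, det_nonsing_inv, Ring.inverse_eq_inv', inv_mul_eq_div]

theorem det_one_add_conj_inv_sub_inv_mul_det_add_one {M N T : Matrix n n F}
    (hN : IsUnit N.det) (hT : IsUnit T.det) (hT₁ : IsUnit (1 + T⁻¹).det)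
    (hM : M * M = (1 + T⁻¹)⁻¹) (hMT : Commute M T) :
    (1 + M * (N⁻¹ - T⁻¹) * M + M * (N⁻¹ - T⁻¹) * M * T).det * (N + 1).det
      = (1 + T).det * (1 + M * (N⁻¹ - T⁻¹) * M).det := by
  set D := N⁻¹ - T⁻¹
  set K := (1 + T⁻¹)⁻¹
  have hKT : K * (1 + T) = T := by
    have h : 1 + T = (1 + T⁻¹) * T := by rw [add_mul, one_mul, nonsing_inv_mul _ hT, add_comm]
    rw [h, nonsing_inv_mul_cancel_left _ _ hT₁]
  have hMTM : M * (1 + T) * M = T := by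
    rw [mul_assoc, ← ((Commute.one_right M).add_right hMT).eq, ← mul_assoc, hM, hKT]
  have hDT : 1 + D * T = N⁻¹ * T := by
    rw [sub_mul, nonsing_inv_mul _ hT, add_sub_cancel]
  have hDK : 1 + D * K = (1 + N⁻¹) * K := by
    have h := mul_nonsing_inv _ hT₁
    rw [add_mul, one_mul] at h
    rw [sub_mul, add_mul, one_mul, ← h]
    abel
  have h₁ : (1 + M * D * M + M * D * M * T).det = (N⁻¹ * T).det := by
    have h : M * D * M + M * D * M * T = M * (D * (M * (1 + T))) := by
      simp only [mul_add, mul_one, mul_assoc]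
    rw [add_assoc, h, det_one_add_mul_comm, mul_assoc D, hMTM, hDT]
  have h₂ : (1 + M * D * M).det = ((1 + N⁻¹) * K).det := by
    rw [mul_assoc, det_one_add_mul_comm, mul_assoc, hM, hDK]
  have hN₁ : 1 + N⁻¹ = N⁻¹ * (N + 1) := by
    rw [mul_add, nonsing_inv_mul _ hN, mul_one, add_comm]
  have hdet : K.det * (1 + T).det = T.det := by rw [← det_mul, hKT]
  rw [h₁, h₂, hN₁, det_mul, det_mul, det_mul, ← hdet]
  ring

end Field

section RCLike

variable {𝕜 : Type*} [RCLike 𝕜]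

theorem PosDef.isUnit_det {A : Matrix n n 𝕜} (hA : A.PosDef) : IsUnit A.det :=
  hA.det_pos.ne'.isUnit

theorem PosDef.inv_sub_inv_add {S N : Matrix n n 𝕜} (hS : S.PosDef) (hN : N.PosDef) :
    (N⁻¹ - (S + N)⁻¹).PosDef := by
  rw [inv_sub_inv_add_eq_inv hS.isUnit_det hN.isUnit_det (hS.add hN).isUnit_det]
  refine (hN.add_posSemidef ?_).inv
  simpa only [hN.1.eq] using hS.inv.posSemidef.conjTranspose_mul_mul_same N

theorem PosSemidef.cfc_sqrt_mul_self {A : Matrix n n 𝕜} (hA : A.PosSemidef) :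
    cfc Real.sqrt A * cfc Real.sqrt A = A := by
  rw [← cfc_mul ..]
  conv_rhs => rw [← cfc_id' ℝ A hA.1.isSelfAdjoint]
  refine cfc_congr (a := A) fun x hx => Real.mul_self_sqrt ?_
  obtain ⟨i, rfl⟩ := hA.1.spectrum_real_eq_range_eigenvalues ▸ hx
  exact hA.eigenvalues_nonneg i

end RCLike

end Matrix

theorem msqrt_eq_cfc_sqrt {s : ℕ} {A : Matrix (Fin s) (Fin s) ℂ} (hA : A.PosSemidef) :
    msqrt A = cfc Real.sqrt A := by
  rw [msqrt, dif_pos hA, hA.1.cfc_eq, IsHermitian.cfc, Unitary.conjStarAlgAut_apply]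
  rfl

/-- Let `S` and `N` be Hermitian positive definite complex `s × s` matrices,
`Σ̃ = S + N` and `Ñ = (√((I+Σ̃⁻¹)⁻¹) (N⁻¹ − Σ̃⁻¹) √((I+Σ̃⁻¹)⁻¹))⁻¹`.  Then
`det(I + (Ñ + I)⁻¹ Σ̃) = det(I + (N + I)⁻¹ S)`. -/
theorem stmt3 {s : ℕ} (S N : Matrix (Fin s) (Fin s) ℂ)
    (hS : S.PosDef) (hN : N.PosDef) :
    (1 + ((msqrt ((1 + (S + N)⁻¹)⁻¹) * (N⁻¹ - (S + N)⁻¹)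
            * msqrt ((1 + (S + N)⁻¹)⁻¹))⁻¹ + 1)⁻¹ * (S + N)).det
      = (1 + (N + 1)⁻¹ * S).det := by
  set T := S + N
  have hT : T.PosDef := hS.add hN
  have hT₁ : (1 + T⁻¹).PosDef := PosDef.one.add hT.inv
  have hK : ((1 + T⁻¹)⁻¹).PosDef := hT₁.inv
  rw [msqrt_eq_cfc_sqrt hK.posSemidef]
  set M := cfc Real.sqrt (1 + T⁻¹)⁻¹
  have hMM : M * M = (1 + T⁻¹)⁻¹ := hK.posSemidef.cfc_sqrt_mul_self
  have hMT : Commute M T := (commute_inv_one_add_inv hT.isUnit_det).symm.cfc_real _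
  have hM : Mᴴ = M := cfc_predicate (p := IsSelfAdjoint) Real.sqrt _
  have hMdet : IsUnit M.det :=
    isUnit_of_mul_isUnit_left (by rw [← det_mul, hMM]; exact hK.isUnit_det)
  have hA : (M * (N⁻¹ - T⁻¹) * M).PosDef := by
    simpa only [hM] using (PosDef.inv_sub_inv_add hS hN).conjTranspose_mul_mul_same
      (mulVec_injective_iff_isUnit.mpr ((isUnit_iff_isUnit_det M).mpr hMdet))
  have hN₁ : (N + 1).PosDef := hN.add PosDef.one
  have hA₁ : (1 + M * (N⁻¹ - T⁻¹) * M).PosDef := PosDef.one.add hA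
  rw [inv_add_one_inv hA.isUnit_det, mul_assoc, det_one_add_inv_mul hA₁.isUnit_det,
    det_one_add_inv_mul hN₁.isUnit_det, div_eq_div_iff hA₁.det_pos.ne' hN₁.det_pos.ne',
    show N + 1 + S = 1 + (S + N) by abel]
  exact det_one_add_conj_inv_sub_inv_mul_det_add_one hN.isUnit_det hT.isUnit_det
    hT₁.isUnit_det hMM hMT
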